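/- Let 0 < H < 1 and set C_m = 1/(√(2π) 2^m m!) for integers m ≥ 0. Then Σ_{m≥0} C_m² (2m)! · sup_{n≥2} ( n^{−2} Σ_{1≤i≠j≤n−1} R_H(i/n, j/n)^{2m} (i/n)^{−H(2m+1)} (j/n)^{−H(2m+1)} ) < ∞. -/

import Mathlib

/-!
Put `c = 2 - 2 ^ H ∈ (0, 1)`. Concavity of `x ↦ x ^ H` improves subadditivity to
`(x + y) ^ H ≤ x ^ H + y ^ H - c * min x y ^ H`, and this gives the correlation bound
`R_H(t, s) ≤ (1 - β) t ^ H s ^ H` for `0 < t < s`, with `β = c / 2 * ((s - t) / s) ^ (2 H)`.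
Bernoulli's inequality turns it into `(1 - β) ^ (2 m) ≤ ((m + 1) β) ^ (-q)` for `q ∈ [0, 1]`, so
each summand of the inner double sum is `O((m + 1) ^ (-q))` times
`(s / (s - t)) ^ (2 H q) (t s) ^ (-H)`.
When `2 H q < 1` the Riemann sums of the latter are bounded uniformly in `n` by a discrete Beta
integral estimate. Finally Wallis' inequality gives `C_m ^ 2 (2 m)! ≤ (m + 1) ^ (-1/2)`, and
`q = 1 / (1 + H)` satisfies both `2 H q < 1` and `1 / 2 + q > 1`.
-/

open MeasureTheory Filter Topology Real

/-- Covariance function of fractional Brownian motion with Hurst parameter `H`. -/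
noncomputable def RH (H t s : ℝ) : ℝ :=
  (t ^ (2 * H) + s ^ (2 * H) - |t - s| ^ (2 * H)) / 2

/-- `C_m = 1/(√(2π) 2^m m!)`. -/
noncomputable def Cm (m : ℕ) : ℝ :=
  1 / (Real.sqrt (2 * Real.pi) * 2 ^ m * (Nat.factorial m))

/-- The inner (nonnegative) double sum over `1 ≤ i ≠ j ≤ n−1`. -/
noncomputable def dblSum (H : ℝ) (m n : ℕ) : ℝ :=
  ((n : ℝ) ^ 2)⁻¹ *
    ∑ i ∈ Finset.Ico 1 n, ∑ j ∈ Finset.Ico 1 n,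
      if i = j then 0 else
        RH H ((i : ℝ) / n) ((j : ℝ) / n) ^ (2 * m) *
          ((i : ℝ) / n) ^ (-(H * (2 * (m : ℝ) + 1))) *
          ((j : ℝ) / n) ^ (-(H * (2 * (m : ℝ) + 1)))

open Finset

lemma ConcaveOn.add_le_add_of_add_eq {s : Set ℝ} {f : ℝ → ℝ} (hf : ConcaveOn ℝ s f)
    {a b c d : ℝ} (ha : a ∈ s) (hd : d ∈ s) (hab : a ≤ b) (hbd : b ≤ d) (hsum : a + d = b + c) :
    f a + f d ≤ f b + f c := by
  rcases hab.eq_or_lt with rfl | hab'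
  · obtain rfl : c = d := by linarith
    exact le_rfl
  have had : 0 < d - a := by linarith
  set l := (d - b) / (d - a)
  have hl0 : 0 ≤ l := div_nonneg (by linarith) had.le
  have hl1 : l ≤ 1 := (div_le_one had).2 (by linarith)
  have hb : l * a + (1 - l) * d = b := by simp only [l]; field_simp; ring
  have hc : (1 - l) * a + l * d = c := by
    rw [show c = a + d - b by linarith]; simp only [l]; field_simp; ring
  have h1 := hf.2 ha hd hl0 (sub_nonneg.2 hl1) (add_sub_cancel l 1)
  have h2 := hf.2 ha hd (sub_nonneg.2 hl1) hl0 (sub_add_cancel 1 l)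
  simp only [smul_eq_mul, hb, hc] at h1 h2
  linarith

lemma rpow_add_le_add_rpow_sub_min {H x y : ℝ} (hH0 : 0 ≤ H) (hH1 : H ≤ 1)
    (hx : 0 ≤ x) (hy : 0 ≤ y) :
    (x + y) ^ H ≤ x ^ H + y ^ H - (2 - 2 ^ H) * min (x ^ H) (y ^ H) := by
  wlog hxy : x ≤ y generalizing x y
  · have := this hy hx (le_of_not_ge hxy)
    rwa [add_comm y, add_comm (y ^ H), min_comm] at this
  have hconc := (Real.concaveOn_rpow hH0 hH1).add_le_add_of_add_eq (a := x) (b := 2 * x)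
    (c := y) (d := x + y) hx (by simp only [Set.mem_Ici]; positivity) (by linarith)
    (by linarith) (by ring)
  rw [Real.mul_rpow zero_le_two hx] at hconc
  rw [min_eq_left (Real.rpow_le_rpow hx hxy hH0)]
  linarith

lemma rpow_two_mul {x : ℝ} (hx : 0 ≤ x) (H : ℝ) : x ^ (2 * H) = (x ^ H) ^ 2 := by
  rw [mul_comm, Real.rpow_mul hx, Real.rpow_two]

lemma rpow_le_one_add_mul {β q : ℝ} (hβ : 0 ≤ β) (hβ1 : β ≤ 1) (hq0 : 0 ≤ q) (hq1 : q ≤ 1)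
    (m : ℕ) : ((m + 1) * β) ^ q ≤ 1 + m * β := by
  rcases le_total ((m + 1) * β) 1 with h | h
  · exact (Real.rpow_le_one (by positivity) h hq0).trans (by nlinarith [m.cast_nonneg (α := ℝ)])
  · exact (Real.rpow_le_self_of_one_le h hq1).trans (by linarith)

lemma one_sub_pow_le_rpow_neg {β q : ℝ} (hβ : 0 < β) (hβ1 : β ≤ 1) (hq0 : 0 ≤ q) (hq1 : q ≤ 1)
    (m : ℕ) : (1 - β) ^ m ≤ ((m + 1) * β) ^ (-q) := by
  have hbern : (1 - β) ^ m * (1 + m * β) ≤ 1 :=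
    calc (1 - β) ^ m * (1 + m * β) ≤ (1 - β) ^ m * (1 + β) ^ m :=
          mul_le_mul_of_nonneg_left (one_add_mul_le_pow (by linarith) m)
            (pow_nonneg (by linarith) m)
      _ = (1 - β ^ 2) ^ m := by rw [← mul_pow]; ring
      _ ≤ 1 := pow_le_one₀ (by nlinarith) (by nlinarith)
  have hpos : 0 < ((m + 1) * β) ^ q := by positivity
  rw [Real.rpow_neg (by positivity), ← one_div, le_div_iff₀ hpos]
  calc (1 - β) ^ m * ((m + 1) * β) ^ q ≤ (1 - β) ^ m * (1 + m * β) :=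
        mul_le_mul_of_nonneg_left (rpow_le_one_add_mul hβ.le hβ1 hq0 hq1 m)
          (pow_nonneg (by linarith) m)
    _ ≤ 1 := hbern

lemma sub_one_rpow_le {p x : ℝ} (hp0 : 0 ≤ p) (hp1 : p ≤ 1) (hx : 1 ≤ x) :
    (x - 1) ^ p ≤ x ^ p - p * x ^ (p - 1) := by
  have hx0 : 0 < x := by linarith
  have hsplit : x - 1 = x * (1 + -x⁻¹) := by field_simp; ring
  have hbern : (1 + -x⁻¹) ^ p ≤ 1 + p * -x⁻¹ :=
    rpow_one_add_le_one_add_mul_self (by simpa using inv_le_one_of_one_le₀ hx) hp0 hp1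
  rw [hsplit, Real.mul_rpow hx0.le (by simpa using inv_le_one_of_one_le₀ hx),
    Real.rpow_sub_one hx0.ne']
  calc x ^ p * (1 + -x⁻¹) ^ p ≤ x ^ p * (1 + p * -x⁻¹) := by gcongr
    _ = x ^ p - p * (x ^ p / x) := by ring

lemma sum_Icc_rpow_neg_le {r : ℝ} (hr0 : 0 ≤ r) (hr1 : r < 1) (n : ℕ) :
    ∑ i ∈ Icc 1 n, (i : ℝ) ^ (-r) ≤ (n : ℝ) ^ (1 - r) / (1 - r) := by
  have hr : 0 < 1 - r := by linarith
  induction n with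
  | zero => simp [Real.zero_rpow hr.ne']
  | succ n ih =>
    have hstep := sub_one_rpow_le hr.le (by linarith) (le_add_of_nonneg_left n.cast_nonneg)
    rw [sum_Icc_succ_top (by omega), Nat.cast_succ]
    rw [add_sub_cancel_right, show 1 - r - 1 = -r by ring] at hstep
    rw [le_div_iff₀ hr] at ih ⊢
    linarith

lemma sum_Ico_rpow_neg_le {r : ℝ} (hr0 : 0 ≤ r) (hr1 : r < 1) (n : ℕ) :
    ∑ i ∈ Ico 1 n, (i : ℝ) ^ (-r) ≤ (n : ℝ) ^ (1 - r) / (1 - r) :=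
  (sum_le_sum_of_subset_of_nonneg Ico_subset_Icc_self fun _ _ _ ↦ by positivity).trans
    (sum_Icc_rpow_neg_le hr0 hr1 n)

lemma sum_Ico_sub_rpow_neg_eq (r : ℝ) (j : ℕ) :
    ∑ i ∈ Ico 1 j, ((j : ℝ) - i) ^ (-r) = ∑ i ∈ Ico 1 j, (i : ℝ) ^ (-r) := by
  have h := sum_Ico_reflect (fun i : ℕ ↦ (i : ℝ) ^ (-r)) 1 (Nat.le_succ j)
  rw [Nat.add_sub_cancel_left, Nat.add_sub_cancel] at h
  rw [← h]
  exact sum_congr rfl fun i hi ↦ by rw [Nat.cast_sub (mem_Ico.1 hi).2.le]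

lemma rpow_neg_le_two_rpow_mul {r x y : ℝ} (hr : 0 ≤ r) (hx : 0 < x) (hxy : x ≤ 2 * y) :
    y ^ (-r) ≤ 2 ^ r * x ^ (-r) :=
  calc y ^ (-r) ≤ (x / 2) ^ (-r) :=
        Real.rpow_le_rpow_of_nonpos (by positivity) (by linarith) (by linarith)
    _ = 2 ^ r * x ^ (-r) := by
        rw [Real.div_rpow hx.le zero_le_two, Real.rpow_neg zero_le_two, div_inv_eq_mul, mul_comm]

lemma sub_rpow_neg_mul_rpow_neg_le {a b : ℝ} (ha : 0 ≤ a) (hb : 0 ≤ b) {i j : ℝ} (hi : 0 < i)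
    (hij : i < j) :
    (j - i) ^ (-a) * i ^ (-b) ≤
      2 ^ a * j ^ (-a) * i ^ (-b) + 2 ^ b * j ^ (-b) * (j - i) ^ (-a) := by
  have hj : 0 < j := hi.trans hij
  have hji : 0 < j - i := by linarith
  rcases le_total j (2 * i) with h | h
  · have := mul_le_mul_of_nonneg_left (rpow_neg_le_two_rpow_mul hb hj h)
      (Real.rpow_nonneg hji.le (-a))
    nlinarith [show 0 ≤ 2 ^ a * j ^ (-a) * i ^ (-b) by positivity]
  · have := mul_le_mul_of_nonneg_right
      (rpow_neg_le_two_rpow_mul ha hj (show j ≤ 2 * (j - i) by linarith))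
      (Real.rpow_nonneg hi.le (-b))
    nlinarith [show 0 ≤ 2 ^ b * j ^ (-b) * (j - i) ^ (-a) by positivity]

lemma sum_Ico_sub_rpow_neg_mul_rpow_neg_le {a b : ℝ} (ha0 : 0 ≤ a) (ha1 : a < 1) (hb0 : 0 ≤ b)
    (hb1 : b < 1) (j : ℕ) :
    ∑ i ∈ Ico 1 j, ((j : ℝ) - i) ^ (-a) * (i : ℝ) ^ (-b) ≤
      (2 ^ a / (1 - b) + 2 ^ b / (1 - a)) * (j : ℝ) ^ (1 - a - b) := by
  rcases Nat.eq_zero_or_pos j with rfl | hj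
  · rw [Ico_eq_empty_of_le zero_le_one, sum_empty]
    have : 0 < 1 - a := by linarith
    have : 0 < 1 - b := by linarith
    positivity
  have hj' : (0 : ℝ) < j := by exact_mod_cast hj
  have hsplit : ∀ i ∈ Ico 1 j, ((j : ℝ) - i) ^ (-a) * (i : ℝ) ^ (-b) ≤
      2 ^ a * (j : ℝ) ^ (-a) * (i : ℝ) ^ (-b) + 2 ^ b * (j : ℝ) ^ (-b) * ((j : ℝ) - i) ^ (-a) := by
    intro i hi
    obtain ⟨hi1, hij⟩ := mem_Ico.1 hi
    exact sub_rpow_neg_mul_rpow_neg_le ha0 hb0 (by exact_mod_cast hi1) (by exact_mod_cast hij)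
  have hb' : ∑ i ∈ Ico 1 j, (i : ℝ) ^ (-b) ≤ (j : ℝ) ^ (1 - b) / (1 - b) :=
    sum_Ico_rpow_neg_le hb0 hb1 j
  have ha' : ∑ i ∈ Ico 1 j, ((j : ℝ) - i) ^ (-a) ≤ (j : ℝ) ^ (1 - a) / (1 - a) :=
    (sum_Ico_sub_rpow_neg_eq a j).trans_le (sum_Ico_rpow_neg_le ha0 ha1 j)
  calc ∑ i ∈ Ico 1 j, ((j : ℝ) - i) ^ (-a) * (i : ℝ) ^ (-b)
      ≤ 2 ^ a * (j : ℝ) ^ (-a) * ∑ i ∈ Ico 1 j, (i : ℝ) ^ (-b) +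
          2 ^ b * (j : ℝ) ^ (-b) * ∑ i ∈ Ico 1 j, ((j : ℝ) - i) ^ (-a) := by
        rw [mul_sum, mul_sum, ← sum_add_distrib]; exact sum_le_sum hsplit
    _ ≤ 2 ^ a * (j : ℝ) ^ (-a) * ((j : ℝ) ^ (1 - b) / (1 - b)) +
          2 ^ b * (j : ℝ) ^ (-b) * ((j : ℝ) ^ (1 - a) / (1 - a)) := by gcongr
    _ = (2 ^ a / (1 - b) + 2 ^ b / (1 - a)) * (j : ℝ) ^ (1 - a - b) := by
        have hab : (j : ℝ) ^ (-a) * (j : ℝ) ^ (1 - b) = (j : ℝ) ^ (1 - a - b) := by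
          rw [← Real.rpow_add hj']; ring_nf
        have hba : (j : ℝ) ^ (-b) * (j : ℝ) ^ (1 - a) = (j : ℝ) ^ (1 - a - b) := by
          rw [← Real.rpow_add hj']; ring_nf
        linear_combination 2 ^ a / (1 - b) * hab + 2 ^ b / (1 - a) * hba

lemma sum_Ico_sum_Ico_rpow_le {a H : ℝ} (ha0 : 0 ≤ a) (ha1 : a < 1) (hH0 : 0 ≤ H) (hH1 : H < 1)
    (n : ℕ) :
    ∑ j ∈ Ico 1 n, ∑ i ∈ Ico 1 j,
        (j : ℝ) ^ a * ((j : ℝ) - i) ^ (-a) * ((i : ℝ) ^ (-H) * (j : ℝ) ^ (-H)) ≤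
      (2 ^ a / (1 - H) + 2 ^ H / (1 - a)) / (1 - H) * (n : ℝ) ^ (2 - 2 * H) := by
  set D := 2 ^ a / (1 - H) + 2 ^ H / (1 - a)
  have hD : 0 ≤ D := by
    have : 0 < 1 - a := by linarith
    have : 0 < 1 - H := by linarith
    positivity
  have hrow : ∀ j ∈ Ico 1 n, ∑ i ∈ Ico 1 j,
      (j : ℝ) ^ a * ((j : ℝ) - i) ^ (-a) * ((i : ℝ) ^ (-H) * (j : ℝ) ^ (-H)) ≤
        D * (n : ℝ) ^ (1 - H) * (j : ℝ) ^ (-H) := by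
    intro j hj
    obtain ⟨hj1, hjn⟩ := mem_Ico.1 hj
    have hj' : (0 : ℝ) < j := by exact_mod_cast hj1
    calc ∑ i ∈ Ico 1 j, (j : ℝ) ^ a * ((j : ℝ) - i) ^ (-a) * ((i : ℝ) ^ (-H) * (j : ℝ) ^ (-H))
        = (j : ℝ) ^ a * (j : ℝ) ^ (-H) * ∑ i ∈ Ico 1 j, ((j : ℝ) - i) ^ (-a) * (i : ℝ) ^ (-H) := by
          rw [mul_sum]; exact sum_congr rfl fun _ _ ↦ by ring
      _ ≤ (j : ℝ) ^ a * (j : ℝ) ^ (-H) * (D * (j : ℝ) ^ (1 - a - H)) := by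
          gcongr; exact sum_Ico_sub_rpow_neg_mul_rpow_neg_le ha0 ha1 hH0 hH1 j
      _ = D * (j : ℝ) ^ (1 - H) * (j : ℝ) ^ (-H) := by
          rw [show 1 - H = a + (1 - a - H) by ring, Real.rpow_add hj']; ring
      _ ≤ D * (n : ℝ) ^ (1 - H) * (j : ℝ) ^ (-H) := by
          gcongr
  calc _ ≤ ∑ j ∈ Ico 1 n, D * (n : ℝ) ^ (1 - H) * (j : ℝ) ^ (-H) := sum_le_sum hrow
    _ = D * (n : ℝ) ^ (1 - H) * ∑ j ∈ Ico 1 n, (j : ℝ) ^ (-H) := by rw [mul_sum]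
    _ ≤ D * (n : ℝ) ^ (1 - H) * ((n : ℝ) ^ (1 - H) / (1 - H)) := by
        gcongr; exact sum_Ico_rpow_neg_le hH0 hH1 n
    _ = D / (1 - H) * (n : ℝ) ^ (2 - 2 * H) := by
        rw [show 2 - 2 * H = (1 - H) + (1 - H) by ring,
          Real.rpow_add' n.cast_nonneg (by linarith)]
        ring

lemma two_sub_two_rpow_pos {H : ℝ} (hH : H < 1) : 0 < 2 - (2 : ℝ) ^ H := by
  linarith [Real.rpow_lt_rpow_of_exponent_lt one_lt_two hH, Real.rpow_one (2 : ℝ)]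

lemma two_sub_two_rpow_le_one {H : ℝ} (hH : 0 ≤ H) : 2 - (2 : ℝ) ^ H ≤ 1 := by
  linarith [Real.one_le_rpow one_le_two hH]

lemma RH_comm (H t s : ℝ) : RH H t s = RH H s t := by
  unfold RH; rw [abs_sub_comm]; ring

lemma RH_nonneg {H t s : ℝ} (hH : 0 ≤ H) (ht : 0 ≤ t) (hts : t ≤ s) : 0 ≤ RH H t s := by
  have hst : |t - s| ^ (2 * H) ≤ s ^ (2 * H) := by
    rw [abs_sub_comm, abs_of_nonneg (by linarith)]
    exact Real.rpow_le_rpow (by linarith) (by linarith) (by positivity)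
  unfold RH
  linarith [Real.rpow_nonneg ht (2 * H)]

lemma sq_add_sq_sub_sq_le {A B U c : ℝ} (hA : 0 < A) (hAB : A ≤ B) (hU : 0 ≤ U) (hUB : U ≤ B)
    (hc0 : 0 ≤ c) (hc1 : c ≤ 1) (h : B ≤ A + U - c * min A U) :
    (A ^ 2 + B ^ 2 - U ^ 2) / 2 ≤ (1 - c / 2 * (U / B) ^ 2) * (A * B) := by
  have hB : 0 < B := hA.trans_le hAB
  have hμ0 : 0 ≤ min A U := le_min hA.le hU
  have hμU : min A U ≤ U := min_le_right A U
  have hμB : U * A ≤ min A U * B := by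
    rcases min_choice A U with hμ | hμ <;> rw [hμ] <;> nlinarith
  have hgap : (B - A) ^ 2 ≤ (U - c * min A U) ^ 2 :=
    pow_le_pow_left₀ (by linarith) (by linarith) 2
  have hsq : (U - c * min A U) ^ 2 ≤ U ^ 2 - c * min A U * U := by
    nlinarith [mul_le_mul_of_nonneg_left ((mul_le_of_le_one_left hμ0 hc1).trans hμU)
      (mul_nonneg hc0 hμ0)]
  rw [div_pow, ← sub_nonneg]
  have key : 0 ≤ 2 * A * B ^ 2 - c * U ^ 2 * A - (A ^ 2 + B ^ 2 - U ^ 2) * B := by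
    nlinarith [mul_le_mul_of_nonneg_left hμB (mul_nonneg hc0 hU)]
  have : (1 - c / 2 * (U ^ 2 / B ^ 2)) * (A * B) - (A ^ 2 + B ^ 2 - U ^ 2) / 2
      = (2 * A * B ^ 2 - c * U ^ 2 * A - (A ^ 2 + B ^ 2 - U ^ 2) * B) / (2 * B) := by
    field_simp
  rw [this]
  positivity

lemma RH_le_of_lt {H t s : ℝ} (hH0 : 0 ≤ H) (hH1 : H ≤ 1) (ht : 0 < t) (hts : t < s) :
    RH H t s ≤ (1 - (2 - 2 ^ H) / 2 * ((s - t) / s) ^ (2 * H)) * (t ^ H * s ^ H) := by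
  have hs : 0 < s := ht.trans hts
  have hst : 0 < s - t := by linarith
  have hsub := rpow_add_le_add_rpow_sub_min hH0 hH1 ht.le hst.le
  rw [add_sub_cancel] at hsub
  have hRH : RH H t s = ((t ^ H) ^ 2 + (s ^ H) ^ 2 - ((s - t) ^ H) ^ 2) / 2 := by
    rw [RH, abs_sub_comm, abs_of_pos hst, rpow_two_mul ht.le, rpow_two_mul hs.le,
      rpow_two_mul hst.le]
  rw [hRH, Real.div_rpow hst.le hs.le, rpow_two_mul hst.le, rpow_two_mul hs.le, ← div_pow]
  refine sq_add_sq_sub_sq_le (by positivity) (Real.rpow_le_rpow ht.le hts.le hH0) (by positivity)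
    (Real.rpow_le_rpow hst.le (by linarith) hH0) ?_ ?_ hsub
  · linarith [Real.rpow_le_rpow_of_exponent_le one_le_two hH1, Real.rpow_one (2 : ℝ)]
  · exact two_sub_two_rpow_le_one hH0

noncomputable def dblSumTerm (H : ℝ) (m : ℕ) (t s : ℝ) : ℝ :=
  RH H t s ^ (2 * m) * t ^ (-(H * (2 * (m : ℝ) + 1))) * s ^ (-(H * (2 * (m : ℝ) + 1)))

lemma dblSumTerm_comm (H : ℝ) (m : ℕ) (t s : ℝ) : dblSumTerm H m t s = dblSumTerm H m s t := by
  rw [dblSumTerm, dblSumTerm, RH_comm]; ring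

lemma dblSum_eq (H : ℝ) (m n : ℕ) :
    dblSum H m n = ((n : ℝ) ^ 2)⁻¹ * ∑ i ∈ Ico 1 n, ∑ j ∈ Ico 1 n,
      if i = j then 0 else dblSumTerm H m ((i : ℝ) / n) ((j : ℝ) / n) := rfl

lemma dblSum_nonneg (H : ℝ) (m n : ℕ) : 0 ≤ dblSum H m n := by
  rw [dblSum_eq]
  refine mul_nonneg (by positivity) (sum_nonneg fun i _ ↦ sum_nonneg fun j _ ↦ ?_)
  split_ifs
  · exact le_rfl
  · have := (even_two_mul m).pow_nonneg (RH H (i / n) (j / n))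
    unfold dblSumTerm; positivity

lemma dblSumTerm_le {H q t s : ℝ} (hH0 : 0 < H) (hH1 : H < 1) (hq0 : 0 ≤ q) (hq1 : q ≤ 1)
    (ht : 0 < t) (hts : t < s) (m : ℕ) :
    dblSumTerm H m t s ≤
      ((m + 1) * ((2 - 2 ^ H) / 2 * ((s - t) / s) ^ (2 * H))) ^ (-q) * (t ^ (-H) * s ^ (-H)) := by
  have hs : 0 < s := ht.trans hts
  set β := (2 - 2 ^ H) / 2 * ((s - t) / s) ^ (2 * H)
  have hc0 := two_sub_two_rpow_pos hH1
  have hc1 := two_sub_two_rpow_le_one hH0.le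
  have hθ1 : ((s - t) / s) ^ (2 * H) ≤ 1 :=
    Real.rpow_le_one (div_nonneg (by linarith) hs.le) ((div_le_one hs).2 (by linarith))
      (by positivity)
  have hβ0 : 0 < β := mul_pos (by positivity) (Real.rpow_pos_of_pos (div_pos (by linarith) hs) _)
  have hβ1 : β ≤ 1 := mul_le_one₀ (by linarith) (by positivity) hθ1
  have hpow : RH H t s ^ (2 * m) ≤ (1 - β) ^ m * (t ^ H * s ^ H) ^ (2 * m) :=
    calc RH H t s ^ (2 * m) ≤ ((1 - β) * (t ^ H * s ^ H)) ^ (2 * m) :=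
          pow_le_pow_left₀ (RH_nonneg hH0.le ht.le hts.le) (RH_le_of_lt hH0.le hH1.le ht hts) _
      _ = (1 - β) ^ (2 * m) * (t ^ H * s ^ H) ^ (2 * m) := mul_pow _ _ _
      _ ≤ (1 - β) ^ m * (t ^ H * s ^ H) ^ (2 * m) :=
          mul_le_mul_of_nonneg_right (pow_le_pow_of_le_one (by linarith) (by linarith) (by omega))
            (by positivity)
  have hcancel : ∀ x : ℝ, 0 < x →
      (x ^ H) ^ (2 * m) * x ^ (-(H * (2 * (m : ℝ) + 1))) = x ^ (-H) := by
    intro x hx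
    rw [← Real.rpow_natCast, ← Real.rpow_mul hx.le, ← Real.rpow_add hx]
    push_cast; ring_nf
  calc dblSumTerm H m t s
      ≤ (1 - β) ^ m * (t ^ H * s ^ H) ^ (2 * m) * t ^ (-(H * (2 * (m : ℝ) + 1))) *
          s ^ (-(H * (2 * (m : ℝ) + 1))) := by
        unfold dblSumTerm; gcongr
    _ = (1 - β) ^ m * (t ^ (-H) * s ^ (-H)) := by
        rw [← hcancel t ht, ← hcancel s hs]; ring
    _ ≤ ((m + 1) * β) ^ (-q) * (t ^ (-H) * s ^ (-H)) := by
        gcongr; exact one_sub_pow_le_rpow_neg hβ0 hβ1 hq0 hq1 m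

lemma dblSumTerm_natCast_div_le {H q : ℝ} (hH0 : 0 < H) (hH1 : H < 1) (hq0 : 0 ≤ q) (hq1 : q ≤ 1)
    (m : ℕ) {i j n : ℕ} (hi : 1 ≤ i) (hij : i < j) (hjn : j < n) :
    dblSumTerm H m ((i : ℝ) / n) ((j : ℝ) / n) ≤
      (2 / (2 - 2 ^ H)) ^ q * ((m : ℝ) + 1) ^ (-q) * (n : ℝ) ^ (2 * H) *
        ((j : ℝ) ^ (2 * H * q) * ((j : ℝ) - i) ^ (-(2 * H * q)) *
          ((i : ℝ) ^ (-H) * (j : ℝ) ^ (-H))) := by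
  have hi' : (0 : ℝ) < i := by exact_mod_cast hi
  have hij' : (i : ℝ) < j := by exact_mod_cast hij
  have hj' : (0 : ℝ) < j := hi'.trans hij'
  have hji : (0 : ℝ) < j - i := by linarith
  have hn : (0 : ℝ) < n := by exact_mod_cast (hij.trans hjn).pos
  have hc0 := two_sub_two_rpow_pos hH1
  have hdiv : ∀ x : ℝ, 0 < x → (x / n) ^ (-H) = (n : ℝ) ^ H * x ^ (-H) := fun x hx ↦ by
    rw [Real.div_rpow hx.le hn.le, Real.rpow_neg hn.le, div_inv_eq_mul, mul_comm]
  have hratio : ((j : ℝ) / n - i / n) / (j / n) = (j - i) / j := by field_simp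
  refine (dblSumTerm_le hH0 hH1 hq0 hq1 (by positivity) (by gcongr) m).trans_eq ?_
  rw [hratio, Real.mul_rpow (by positivity) (by positivity),
    Real.mul_rpow (by positivity) (by positivity), ← Real.rpow_mul (by positivity),
    show 2 * H * -q = -(2 * H * q) by ring, Real.div_rpow hji.le hj'.le, Real.rpow_neg hj'.le,
    div_inv_eq_mul, hdiv i hi', hdiv j hj',
    Real.rpow_neg (by positivity : (0 : ℝ) ≤ (2 - 2 ^ H) / 2), ← Real.inv_rpow (by positivity),
    inv_div, show (n : ℝ) ^ (2 * H) = n ^ H * n ^ H by rw [two_mul, Real.rpow_add hn]]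
  ring

lemma sum_Ico_sum_Ico_ite_eq_two_mul {g : ℕ → ℕ → ℝ} (hg : ∀ i j, g i j = g j i) (k n : ℕ) :
    ∑ i ∈ Ico k n, ∑ j ∈ Ico k n, (if i = j then 0 else g i j) =
      2 * ∑ j ∈ Ico k n, ∑ i ∈ Ico k j, g i j := by
  have hsplit : ∀ i j, (if i = j then 0 else g i j) =
      (if i < j then g i j else 0) + (if j < i then g j i else 0) := by
    intro i j
    rcases lt_trichotomy i j with h | rfl | h
    · simp [h, h.ne, h.not_gt]
    · simp
    · simp [h, h.ne', h.not_gt, hg i j]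
  have hupper : ∑ i ∈ Ico k n, ∑ j ∈ Ico k n, (if i < j then g i j else 0) =
      ∑ j ∈ Ico k n, ∑ i ∈ Ico k j, g i j := by
    rw [sum_comm]
    refine sum_congr rfl fun j hj ↦ ?_
    rw [← sum_filter, Ico_filter_lt, min_eq_right (mem_Ico.1 hj).2.le]
  simp only [hsplit, sum_add_distrib]
  rw [sum_comm (f := fun i j ↦ if j < i then g j i else 0), hupper]
  ring

lemma dblSum_le {H q : ℝ} (hH0 : 0 < H) (hH1 : H < 1) (hq0 : 0 ≤ q) (hq1 : q ≤ 1)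
    (hHq : 2 * H * q < 1) (m n : ℕ) :
    dblSum H m n ≤ 2 * (2 / (2 - 2 ^ H)) ^ q *
      ((2 ^ (2 * H * q) / (1 - H) + 2 ^ H / (1 - 2 * H * q)) / (1 - H)) * ((m : ℝ) + 1) ^ (-q) := by
  set a := 2 * H * q
  set K := (2 / (2 - 2 ^ H)) ^ q * ((m : ℝ) + 1) ^ (-q)
  set E := (2 ^ a / (1 - H) + 2 ^ H / (1 - a)) / (1 - H)
  have hc0 := two_sub_two_rpow_pos hH1
  have hK : 0 ≤ K := by positivity
  have hE : 0 ≤ E := by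
    have : 0 < 1 - a := by linarith
    have : 0 < 1 - H := by linarith
    positivity
  rcases n.eq_zero_or_pos with rfl | hn
  · rw [dblSum_eq, Ico_eq_empty_of_le zero_le_one, sum_empty, mul_zero]
    positivity
  have hn' : (0 : ℝ) < n := by exact_mod_cast hn
  have hrows : ∑ j ∈ Ico 1 n, ∑ i ∈ Ico 1 j, dblSumTerm H m ((i : ℝ) / n) ((j : ℝ) / n) ≤
      K * (n : ℝ) ^ (2 * H) * (E * (n : ℝ) ^ (2 - 2 * H)) := by
    calc _ ≤ ∑ j ∈ Ico 1 n, ∑ i ∈ Ico 1 j, K * (n : ℝ) ^ (2 * H) *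
            ((j : ℝ) ^ a * ((j : ℝ) - i) ^ (-a) * ((i : ℝ) ^ (-H) * (j : ℝ) ^ (-H))) := by
          refine sum_le_sum fun j hj ↦ sum_le_sum fun i hi ↦ ?_
          exact dblSumTerm_natCast_div_le hH0 hH1 hq0 hq1 m (mem_Ico.1 hi).1 (mem_Ico.1 hi).2
            (mem_Ico.1 hj).2
      _ = K * (n : ℝ) ^ (2 * H) * ∑ j ∈ Ico 1 n, ∑ i ∈ Ico 1 j,
            (j : ℝ) ^ a * ((j : ℝ) - i) ^ (-a) * ((i : ℝ) ^ (-H) * (j : ℝ) ^ (-H)) := by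
          simp only [mul_sum]
      _ ≤ K * (n : ℝ) ^ (2 * H) * (E * (n : ℝ) ^ (2 - 2 * H)) := by
          gcongr
          exact sum_Ico_sum_Ico_rpow_le (by positivity) hHq hH0.le hH1 n
  rw [dblSum_eq, sum_Ico_sum_Ico_ite_eq_two_mul (fun i j ↦ dblSumTerm_comm H m _ _)]
  calc ((n : ℝ) ^ 2)⁻¹ * (2 * _)
      ≤ ((n : ℝ) ^ 2)⁻¹ * (2 * (K * (n : ℝ) ^ (2 * H) * (E * (n : ℝ) ^ (2 - 2 * H)))) := by
        gcongr
    _ = 2 * K * E * (((n : ℝ) ^ 2)⁻¹ * ((n : ℝ) ^ (2 * H) * (n : ℝ) ^ (2 - 2 * H))) := by ring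
    _ = 2 * (2 / (2 - 2 ^ H)) ^ q * E * ((m : ℝ) + 1) ^ (-q) := by
        rw [← Real.rpow_add hn', add_sub_cancel, Real.rpow_two, inv_mul_cancel₀ (by positivity)]
        ring

lemma Cm_sq_mul_factorial_le (m : ℕ) :
    Cm m ^ 2 * (2 * m).factorial ≤ ((m : ℝ) + 1) ^ (-(1 / 2 : ℝ)) := by
  set A := Cm m ^ 2 * (2 * m).factorial
  have hA0 : 0 ≤ A := by unfold A Cm; positivity
  have hW : A ^ 2 * (4 * π ^ 2 * (2 * m + 1) * Real.Wallis.W m) = 1 := by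
    have hsqrt : Real.sqrt (2 * π) ^ 2 = 2 * π := Real.sq_sqrt (by positivity)
    rw [Real.Wallis.W_eq_factorial_ratio]
    unfold A Cm
    field_simp
    rw [show Real.sqrt (2 * π) ^ 4 = (Real.sqrt (2 * π) ^ 2) ^ 2 by ring, hsqrt]
    ring
  have hWle : π / 4 ≤ Real.Wallis.W m := by
    refine le_trans ?_ (Real.Wallis.le_W m)
    rw [div_mul_div_comm, div_le_div_iff₀ (by norm_num) (by positivity)]
    nlinarith [Real.pi_pos, m.cast_nonneg (α := ℝ)]
  have hsq : A ^ 2 * ((m : ℝ) + 1) ≤ 1 := by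
    have hπ : 1 ≤ π ^ 3 := one_le_pow₀ (by linarith [Real.pi_gt_three])
    refine le_trans ?_ hW.le
    gcongr
    calc (m : ℝ) + 1 ≤ π ^ 3 * (2 * m + 1) := by nlinarith [m.cast_nonneg (α := ℝ)]
      _ = 4 * π ^ 2 * (2 * m + 1) * (π / 4) := by ring
      _ ≤ 4 * π ^ 2 * (2 * m + 1) * Real.Wallis.W m := by gcongr
  rw [Real.rpow_neg (by positivity), ← Real.sqrt_eq_rpow, ← Real.sqrt_inv,
    Real.le_sqrt hA0 (by positivity), ← one_div, le_div_iff₀ (by positivity)]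
  exact hsq

lemma tsum_ofReal_mul_biSup_lt_top {ι : Type*} {P : ι → Prop} {a c : ℕ → ℝ} {b : ℕ → ι → ℝ}
    (ha : ∀ m, 0 ≤ a m) (hc : Summable c) (hab : ∀ m i, P i → a m * b m i ≤ c m) :
    ∑' m, ENNReal.ofReal (a m) * ⨆ (i) (_ : P i), ENNReal.ofReal (b m i) < ⊤ := by
  have hterm : ∀ m, ENNReal.ofReal (a m) * ⨆ (i) (_ : P i), ENNReal.ofReal (b m i) ≤
      ENNReal.ofReal (c m) := by
    intro m
    simp only [ENNReal.mul_iSup, ← ENNReal.ofReal_mul (ha m)]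
    exact iSup₂_le fun i hi ↦ ENNReal.ofReal_le_ofReal (hab m i hi)
  exact (ENNReal.tsum_le_tsum hterm).trans_lt
    (ENNReal.tsum_coe_ne_top_iff_summable.2 hc.toNNReal).lt_top

theorem statement11 (H : ℝ) (hH : 0 < H) (hH' : H < 1) :
    (∑' m : ℕ, ENNReal.ofReal ((Cm m) ^ 2 * (Nat.factorial (2 * m))) *
        ⨆ (n : ℕ) (_ : 2 ≤ n), ENNReal.ofReal (dblSum H m n)) < ⊤ := by
  set q := 1 / (1 + H)
  have hq0 : 0 ≤ q := by positivity
  have hq1 : q ≤ 1 := by rw [div_le_one (by linarith)]; linarith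
  have hHq : 2 * H * q < 1 := by rw [mul_one_div, div_lt_one (by linarith)]; linarith
  have hq : 1 < 1 / 2 + q := by
    rw [← sub_lt_iff_lt_add', lt_div_iff₀ (by linarith)]; linarith
  obtain ⟨K, hK⟩ : ∃ K, ∀ m n, dblSum H m n ≤ K * ((m : ℝ) + 1) ^ (-q) :=
    ⟨_, dblSum_le hH hH' hq0 hq1 hHq⟩
  refine tsum_ofReal_mul_biSup_lt_top (c := fun m ↦ K * ((m : ℝ) + 1) ^ (-(1 / 2 + q)))
    (fun m ↦ by positivity) ?_ fun m n _ ↦ ?_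
  · have hp : Summable fun m : ℕ ↦ (m : ℝ) ^ (-(1 / 2 + q)) :=
      Real.summable_nat_rpow.2 (by linarith)
    exact ((summable_nat_add_iff 1).2 hp).mul_left K |>.congr fun m ↦ by push_cast; rfl
  calc Cm m ^ 2 * (2 * m).factorial * dblSum H m n
      ≤ ((m : ℝ) + 1) ^ (-(1 / 2 : ℝ)) * (K * ((m : ℝ) + 1) ^ (-q)) :=
        mul_le_mul (Cm_sq_mul_factorial_le m) (hK m n) (dblSum_nonneg H m n) (by positivity)
    _ = K * ((m : ℝ) + 1) ^ (-(1 / 2 + q)) := by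
        rw [neg_add, Real.rpow_add (by positivity)]; ring
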